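/- Let 0 < ℓ ≤ 1, let λ ≥ 0, and let j be a natural number with j ≥ ⌊√λ⌋ + 1. Set w = arcsinh(1/sinh(ℓ/2)). Suppose u : ℝ → ℝ is twice differentiable and satisfies u''(ρ) = (1/4 − λ + (1/4 + 4π²j²/ℓ²)·(1/cosh²ρ))·u(ρ) for all ρ ∈ [0, w], with initial conditions u(0) = 1 and u'(0) = 0. Then ∫₀^{w−1} u(ρ)² dρ ≤ (4/e²) · ∫₀^{w} u(ρ)² dρ. -/

import Mathlib

open Real Set

/-! The coefficient `V ρ = 1/4 - λ + (1/4 + 4π²j²/ℓ²) / cosh² ρ` of `u'' = V u` is at least `1`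
on `[0, w]`, since `cosh² ρ ≤ 1 + 4/ℓ²` there and `λ < j²`. Starting from `u 0 = 1`, `u' 0 = 0`,
the solution therefore stays positive and nondecreasing, and comparison with `u'' = u` gives
`u (ρ + 1) ≥ cosh 1 * u ρ ≥ (e/2) * u ρ`. Squaring and integrating,
`∫₀^{w-1} u² ≤ (4/e²) ∫₁^w u²`; the shift makes sense because `w ≥ 1`,
which amounts to `sinh 1 * sinh (1/2) ≤ 1`. -/

theorem Real.sinh_one_mul_sinh_le_one {x : ℝ} (hx : x ≤ 1 / 2) : sinh 1 * sinh x ≤ 1 := by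
  have hsinh_one_pos : 0 < sinh 1 := sinh_pos_iff.2 one_pos
  have hsinh_half : sinh x ≤ sinh 1 / 2 := by
    have h2 : sinh 1 = 2 * sinh (1 / 2) * cosh (1 / 2) := by
      rw [← sinh_two_mul]; norm_num
    have := one_le_cosh (1 / 2)
    have := sinh_le_sinh.2 hx
    nlinarith [sinh_pos_iff.2 (by norm_num : (0 : ℝ) < 1 / 2)]
  have hsinh_one : sinh 1 < 1.36 := by
    rw [sinh_eq]
    linarith [exp_one_lt_d9, exp_pos (-1)]
  nlinarith

theorem Real.one_le_arsinh_one_div_sinh_half {ℓ : ℝ} (h0 : 0 < ℓ) (h1 : ℓ ≤ 1) :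
    1 ≤ arsinh (1 / sinh (ℓ / 2)) := by
  rw [← sinh_le_sinh, sinh_arsinh, le_div_iff₀ (sinh_pos_iff.2 (by positivity))]
  exact sinh_one_mul_sinh_le_one (by linarith)

theorem Real.cosh_sq_le_one_add_one_div_sq {x ρ : ℝ} (hx : 0 < x) (hρ0 : 0 ≤ ρ)
    (hρ : ρ ≤ arsinh (1 / sinh x)) : cosh ρ ^ 2 ≤ 1 + 1 / x ^ 2 := by
  rw [← sinh_le_sinh, sinh_arsinh] at hρ
  have hsinh : sinh ρ ≤ 1 / x :=
    hρ.trans (one_div_le_one_div_of_le hx (self_le_sinh_iff.2 hx.le))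
  have := pow_le_pow_left₀ (sinh_nonneg_iff.2 hρ0) hsinh 2
  rw [cosh_sq, one_div_pow] at *
  linarith

theorem one_le_potential {ℓ lam ρ : ℝ} {j : ℕ} (hℓ0 : 0 < ℓ) (hℓ1 : ℓ ≤ 1)
    (hj : ⌊√lam⌋₊ < j) (hρ0 : 0 ≤ ρ) (hρ : ρ ≤ arsinh (1 / sinh (ℓ / 2))) :
    1 ≤ 1 / 4 - lam + (1 / 4 + 4 * π ^ 2 * (j : ℝ) ^ 2 / ℓ ^ 2) * (1 / cosh ρ ^ 2) := by
  have hlam : lam ≤ (j : ℝ) ^ 2 := (lt_sq_of_sqrt_lt (Nat.lt_of_floor_lt hj)).le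
  have hj1 : (1 : ℝ) ≤ j := by exact_mod_cast Nat.one_le_of_lt hj
  have hℓsq : 0 < ℓ ^ 2 := by positivity
  have hC0 : 0 < cosh ρ ^ 2 := by positivity
  have hC : cosh ρ ^ 2 ≤ 5 / ℓ ^ 2 := by
    have := (cosh_sq_le_one_add_one_div_sq (by positivity) hρ0 hρ).trans_eq
      (show 1 + 1 / (ℓ / 2) ^ 2 = 1 + 4 / ℓ ^ 2 by ring)
    have : 1 ≤ 1 / ℓ ^ 2 := by rw [le_div_iff₀ hℓsq]; nlinarith
    linarith [show 5 / ℓ ^ 2 = 1 / ℓ ^ 2 + 4 / ℓ ^ 2 by ring]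
  have hπ : 10 ≤ 4 * π ^ 2 := by nlinarith [pi_gt_three]
  have key : (3 / 4 + lam) * cosh ρ ^ 2 ≤ 4 * π ^ 2 * j ^ 2 / ℓ ^ 2 :=
    calc (3 / 4 + lam) * cosh ρ ^ 2 ≤ 2 * j ^ 2 * (5 / ℓ ^ 2) := by
          apply mul_le_mul (by nlinarith) hC hC0.le (by positivity)
      _ = 10 * j ^ 2 / ℓ ^ 2 := by ring
      _ ≤ 4 * π ^ 2 * j ^ 2 / ℓ ^ 2 := by gcongr
  have : 3 / 4 + lam ≤ (1 / 4 + 4 * π ^ 2 * j ^ 2 / ℓ ^ 2) / cosh ρ ^ 2 := by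
    rw [le_div_iff₀ hC0]; linarith
  rw [mul_one_div]
  linarith

section SecondOrder

variable {f f' f'' : ℝ → ℝ} {a b : ℝ}

theorem monotoneOn_Icc_of_hasDerivAt_nonneg (hf : ∀ x, HasDerivAt f (f' x) x)
    (h : ∀ x ∈ Ioo a b, 0 ≤ f' x) : MonotoneOn f (Icc a b) :=
  monotoneOn_of_hasDerivWithinAt_nonneg (convex_Icc a b)
    (continuous_iff_continuousAt.2 fun x => (hf x).continuousAt).continuousOn
    (fun x _ => (hf x).hasDerivWithinAt) (by rwa [interior_Icc])

theorem nonneg_of_hasDerivAt_of_nonneg_left (hf : ∀ x, HasDerivAt f (f' x) x)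
    (h : ∀ x ∈ Ioo a b, 0 ≤ f' x) (ha : 0 ≤ f a) : ∀ x ∈ Icc a b, 0 ≤ f x := fun _ hx =>
  ha.trans (monotoneOn_Icc_of_hasDerivAt_nonneg hf h (left_mem_Icc.2 (hx.1.trans hx.2)) hx hx.1)

theorem pos_of_second_deriv_nonneg_of_pos (hf : ∀ x, HasDerivAt f (f' x) x)
    (hf' : ∀ x, HasDerivAt f' (f'' x) x) (h : ∀ x ∈ Icc a b, 0 < f x → 0 ≤ f'' x)
    (ha : 0 < f a) (ha' : 0 ≤ f' a) : ∀ x ∈ Icc a b, 0 < f x := by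
  by_contra! hneg
  set S := {x ∈ Icc a b | f x ≤ 0}
  have hS : IsClosed S := isClosed_Icc.inter <|
    isClosed_le (continuous_iff_continuousAt.2 fun x => (hf x).continuousAt) continuous_const
  have hbdd : BddBelow S := ⟨a, fun x hx => hx.1.1⟩
  obtain ⟨hzmem, hz⟩ : sInf S ∈ S := hS.csInf_mem hneg hbdd
  set z := sInf S
  have hpos : ∀ x ∈ Ico a z, 0 < f x := fun x hx => by
    by_contra! hx'
    exact (csInf_le hbdd ⟨⟨hx.1, hx.2.le.trans hzmem.2⟩, hx'⟩).not_gt hx.2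
  have hf'_nonneg : ∀ x ∈ Icc a z, 0 ≤ f' x :=
    nonneg_of_hasDerivAt_of_nonneg_left hf'
      (fun x hx => h x ⟨hx.1.le, hx.2.le.trans hzmem.2⟩ (hpos x ⟨hx.1.le, hx.2⟩)) ha'
  have := monotoneOn_Icc_of_hasDerivAt_nonneg hf
    (fun x hx => hf'_nonneg x (Ioo_subset_Icc_self hx))
    (left_mem_Icc.2 hzmem.1) (right_mem_Icc.2 hzmem.1) hzmem.1
  linarith

/-- Integrating factors: first `exp (-x) * (f' + f)` is monotone, and then so is `exp x * f`. -/
theorem nonneg_of_le_second_deriv (hf : ∀ x, HasDerivAt f (f' x) x)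
    (hf' : ∀ x, HasDerivAt f' (f'' x) x) (h : ∀ x ∈ Icc a b, f x ≤ f'' x) (ha : 0 ≤ f a)
    (ha' : 0 ≤ f' a + f a) : ∀ x ∈ Icc a b, 0 ≤ f x := by
  have hsum : ∀ x ∈ Icc a b, 0 ≤ exp (-x) * (f' x + f x) :=
    nonneg_of_hasDerivAt_of_nonneg_left (f' := fun x => exp (-x) * (f'' x - f x))
      (fun x => (((hasDerivAt_neg x).exp).mul ((hf' x).add (hf x))).congr_deriv
        (by simp only [Pi.add_apply]; ring))
      (fun x hx => mul_nonneg (exp_pos _).le (sub_nonneg.2 (h x (Ioo_subset_Icc_self hx))))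
      (mul_nonneg (exp_pos _).le ha')
  intro x hx
  have := nonneg_of_hasDerivAt_of_nonneg_left (f' := fun x => exp x * (f' x + f x))
      (fun x => ((hasDerivAt_exp x).mul (hf x)).congr_deriv (by ring))
      (fun y hy => by
        have := hsum y (Ioo_subset_Icc_self hy)
        rw [exp_neg] at this
        exact mul_nonneg (exp_pos y).le (nonneg_of_mul_nonneg_right this (by positivity)))
      (mul_nonneg (exp_pos _).le ha) x hx
  exact nonneg_of_mul_nonneg_right this (exp_pos x)

theorem mul_cosh_sub_le_of_le_second_deriv (hf : ∀ x, HasDerivAt f (f' x) x)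
    (hf' : ∀ x, HasDerivAt f' (f'' x) x) (hab : a ≤ b) (h : ∀ x ∈ Icc a b, f x ≤ f'' x)
    (ha' : 0 ≤ f' a) : f a * cosh (b - a) ≤ f b := by
  have := nonneg_of_le_second_deriv (f := fun x => f x - f a * cosh (x - a))
    (f' := fun x => f' x - f a * sinh (x - a)) (f'' := fun x => f'' x - f a * cosh (x - a))
    (fun x => ((hf x).sub (((hasDerivAt_id x).sub_const a).cosh.const_mul _)).congr_deriv
      (by simp))
    (fun x => ((hf' x).sub (((hasDerivAt_id x).sub_const a).sinh.const_mul _)).congr_deriv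
      (by simp))
    (fun x hx => by linarith [h x hx]) (by simp) (by simpa using ha') b (right_mem_Icc.2 hab)
  linarith

end SecondOrder

theorem intervalIntegral_sub_le_mul_of_le_mul_shift {g : ℝ → ℝ} (hg : Continuous g)
    {K d w : ℝ} (hK : 0 ≤ K) (hd : 0 ≤ d) (hdw : d ≤ w) (hg0 : ∀ x ∈ Icc 0 d, 0 ≤ g x)
    (h : ∀ x ∈ Icc 0 (w - d), g x ≤ K * g (x + d)) :
    ∫ x in 0..w - d, g x ≤ K * ∫ x in 0..w, g x := by
  have hshift : ∫ x in 0..w - d, g x ≤ K * ∫ x in d..w, g x := by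
    calc ∫ x in 0..w - d, g x ≤ ∫ x in 0..w - d, K * g (x + d) :=
          intervalIntegral.integral_mono_on (by linarith) (hg.intervalIntegrable _ _)
            ((continuous_const.mul (hg.comp (continuous_add_const d))).intervalIntegrable _ _) h
      _ = K * ∫ x in d..w, g x := by
          rw [intervalIntegral.integral_const_mul, intervalIntegral.integral_comp_add_right]
          simp
  have hsplit := intervalIntegral.integral_add_adjacent_intervals (μ := MeasureTheory.volume)
    (hg.intervalIntegrable 0 d) (hg.intervalIntegrable d w)
  have hhead : 0 ≤ ∫ x in 0..d, g x := intervalIntegral.integral_nonneg hd hg0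
  nlinarith

theorem sq_le_four_div_exp_one_sq_mul_sq {x y : ℝ} (hx : 0 ≤ x) (h : x * cosh 1 ≤ y) :
    x ^ 2 ≤ 4 / exp 1 ^ 2 * y ^ 2 := by
  have hcosh : exp 1 / 2 ≤ cosh 1 := by rw [cosh_eq]; linarith [exp_pos (-1)]
  have := pow_le_pow_left₀ (by positivity) ((mul_le_mul_of_nonneg_left hcosh hx).trans h) 2
  rw [div_mul_eq_mul_div, le_div_iff₀ (by positivity)]
  nlinarith

theorem stmt1_general (ℓ lam : ℝ) (hℓ0 : 0 < ℓ) (hℓ1 : ℓ ≤ 1)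
    (j : ℕ) (hj : j ≥ ⌊Real.sqrt lam⌋₊ + 1)
    (w : ℝ) (hw : w = Real.arsinh (1 / Real.sinh (ℓ / 2)))
    (u : ℝ → ℝ) (hu : Differentiable ℝ u) (hu' : Differentiable ℝ (deriv u))
    (hode : ∀ ρ ∈ Set.Icc 0 w,
      deriv (deriv u) ρ =
        (1 / 4 - lam + (1 / 4 + 4 * Real.pi ^ 2 * (j : ℝ) ^ 2 / ℓ ^ 2)
          * (1 / Real.cosh ρ ^ 2)) * u ρ)
    (h0 : u 0 = 1) (h1 : deriv u 0 = 0) :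
    ∫ ρ in (0:ℝ)..(w - 1), u ρ ^ 2 ≤ 4 / Real.exp 1 ^ 2 * ∫ ρ in (0:ℝ)..w, u ρ ^ 2 := by
  have hu1 x := (hu x).hasDerivAt
  have hu2 x := (hu' x).hasDerivAt
  have hw1 : 1 ≤ w := hw ▸ one_le_arsinh_one_div_sinh_half hℓ0 hℓ1
  have hV : ∀ ρ ∈ Icc 0 w, 1 ≤ 1 / 4 - lam +
      (1 / 4 + 4 * π ^ 2 * (j : ℝ) ^ 2 / ℓ ^ 2) * (1 / cosh ρ ^ 2) := fun ρ hρ =>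
    one_le_potential hℓ0 hℓ1 hj hρ.1 (hw ▸ hρ.2)
  have hconvex : ∀ ρ ∈ Icc 0 w, 0 < u ρ → 0 ≤ deriv (deriv u) ρ := fun ρ hρ hpos => by
    rw [hode ρ hρ]; exact mul_nonneg (zero_le_one.trans (hV ρ hρ)) hpos.le
  have hpos := pos_of_second_deriv_nonneg_of_pos hu1 hu2 hconvex (h0 ▸ one_pos) h1.ge
  have hderiv_nonneg := nonneg_of_hasDerivAt_of_nonneg_left hu2
    (fun ρ hρ => hconvex ρ (Ioo_subset_Icc_self hρ) (hpos ρ (Ioo_subset_Icc_self hρ))) h1.ge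
  refine intervalIntegral_sub_le_mul_of_le_mul_shift (hu.continuous.pow 2) (by positivity)
    zero_le_one hw1 (fun _ _ => sq_nonneg _) fun ρ hρ => ?_
  have hsub : Icc ρ (ρ + 1) ⊆ Icc 0 w := Icc_subset_Icc hρ.1 (by linarith [hρ.2])
  have hρ0 : ρ ∈ Icc 0 w := hsub (left_mem_Icc.2 (by linarith))
  have hgrowth : u ρ * cosh 1 ≤ u (ρ + 1) := by
    simpa using mul_cosh_sub_le_of_le_second_deriv hu1 hu2 (le_add_of_nonneg_right zero_le_one)
      (fun x hx => by
        rw [hode x (hsub hx)]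
        nlinarith [hV x (hsub hx), hpos x (hsub hx)])
      (hderiv_nonneg ρ hρ0)
  exact sq_le_four_div_exp_one_sq_mul_sq (hpos ρ hρ0).le hgrowth

/-- Same as Statement 0 but with initial conditions `u 0 = 1`, `u' 0 = 0`. -/
theorem stmt1 (ℓ lam : ℝ) (hℓ0 : 0 < ℓ) (hℓ1 : ℓ ≤ 1) (hlam : 0 ≤ lam)
    (j : ℕ) (hj : j ≥ ⌊Real.sqrt lam⌋₊ + 1)
    (w : ℝ) (hw : w = Real.arsinh (1 / Real.sinh (ℓ / 2)))
    (u : ℝ → ℝ) (hu : Differentiable ℝ u) (hu' : Differentiable ℝ (deriv u))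
    (hode : ∀ ρ ∈ Set.Icc 0 w,
      deriv (deriv u) ρ =
        (1 / 4 - lam + (1 / 4 + 4 * Real.pi ^ 2 * (j : ℝ) ^ 2 / ℓ ^ 2)
          * (1 / Real.cosh ρ ^ 2)) * u ρ)
    (h0 : u 0 = 1) (h1 : deriv u 0 = 0) :
    ∫ ρ in (0:ℝ)..(w - 1), u ρ ^ 2 ≤ 4 / Real.exp 1 ^ 2 * ∫ ρ in (0:ℝ)..w, u ρ ^ 2 :=
  stmt1_general ℓ lam hℓ0 hℓ1 j hj w hw u hu hu' hode h0 h1
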